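/- arXiv:2007.12541 — 5 statements merged into one kernel-verified Lean document; each statement's English description precedes it below -/
import Mathlib

section
/- Let s ≥ 1 and m ≥ 0 be integers, and for each j ∈ {1,…,s} let a_j be a positive real number, with a_{j₀} ≠ 1 for at least one index j₀. Then there is no holomorphic function F : ℍ^s × 𝔻^m → ℂ satisfying Im F(τ,w) > 0 for all (τ,w) ∈ ℍ^s × 𝔻^m and F(τ + e_j, w) = a_j · F(τ, w) for all (τ,w) ∈ ℍ^s × 𝔻^m and all j ∈ {1,…,s}. (This is the 'hyperbolic monodromy is excluded' part of the local extension theorem for transversely hyperbolic structures, stated on the universal cover ℍ^s × 𝔻^m of the polydisk 𝔻^{s+m} with its first s coordinate hyperplanes removed.) -/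
/-!
Restricting `F` to a complex line in the `j₀`-th variable gives a holomorphic self-map `f` of the
upper half-plane with `f (z + 1) = A * f z`, where `A = a j₀ ≠ 1`. By the Schwarz–Pick lemma the
pseudo-hyperbolic distance between `f (iT)` and `f (iT + 1)` is at most `1 / T`, which tends to
`0`; but the pseudo-hyperbolic distance between `p` and `A * p` is at least `|A - 1| / (A + 1)`
for every `p` in the upper half-plane.
-/

open Complex ComplexConjugate Metric Set

/-- For `p`, `w` in the upper half-plane, `‖cayleyAt p w‖` is their pseudo-hyperbolic distance. -/
noncomputable def cayleyAt (p w : ℂ) : ℂ := (w - p) / (w - conj p)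

lemma norm_sub_lt_norm_sub_conj {u v : ℂ} (hu : 0 < u.im) (hv : 0 < v.im) :
    ‖u - v‖ < ‖u - conj v‖ := by
  have h : normSq (u - v) < normSq (u - conj v) := by
    simp only [normSq_apply, sub_re, sub_im, conj_re, conj_im]
    nlinarith
  rw [norm_def, norm_def]
  exact Real.sqrt_lt_sqrt (normSq_nonneg _) h

lemma norm_cayleyAt_lt_one {p w : ℂ} (hp : 0 < p.im) (hw : 0 < w.im) : ‖cayleyAt p w‖ < 1 := by
  have h := norm_sub_lt_norm_sub_conj hw hp
  rw [cayleyAt, norm_div, div_lt_one ((norm_nonneg _).trans_lt h)]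
  exact h

lemma cayleyAt_self (p : ℂ) : cayleyAt p p = 0 := by
  simp [cayleyAt]

lemma norm_cayleyAt_le_div_of_im_pos {f : ℂ → ℂ} {c z : ℂ} {R : ℝ}
    (hf : DifferentiableOn ℂ f (ball c R)) (hf_im : ∀ w ∈ ball c R, 0 < (f w).im)
    (hz : z ∈ ball c R) :
    ‖cayleyAt (f c) (f z)‖ ≤ ‖z - c‖ / R := by
  have hc : c ∈ ball c R := mem_ball_self (pos_of_mem_ball hz)
  have hden : ∀ w ∈ ball c R, f w - conj (f c) ≠ 0 := fun w hw h => by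
    have := congrArg im h
    simp only [sub_im, conj_im, sub_neg_eq_add, zero_im] at this
    linarith [hf_im w hw, hf_im c hc]
  have hg : DifferentiableOn ℂ (fun w => cayleyAt (f c) (f w)) (ball c R) :=
    (hf.sub_const _).div (hf.sub_const _) hden
  have hmaps : MapsTo (fun w => cayleyAt (f c) (f w)) (ball c R)
      (closedBall (cayleyAt (f c) (f c)) 1) := fun w hw => by
    rw [cayleyAt_self, mem_closedBall, dist_zero_right]
    exact (norm_cayleyAt_lt_one (hf_im c hc) (hf_im w hw)).le
  simpa [cayleyAt_self, dist_eq, div_eq_inv_mul] using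
    dist_le_div_mul_dist_of_mapsTo_ball hg hmaps hz

lemma div_le_norm_cayleyAt_mul {A : ℝ} (hA : 0 < A) {p : ℂ} (hp : 0 < p.im) :
    |A - 1| / (A + 1) ≤ ‖cayleyAt p (A * p)‖ := by
  have hnum : ‖(A : ℂ) * p - p‖ = |A - 1| * ‖p‖ := by
    rw [show (A : ℂ) * p - p = ((A - 1 : ℝ) : ℂ) * p by push_cast; ring, norm_mul, norm_real,
      Real.norm_eq_abs]
  have hden : ‖(A : ℂ) * p - conj p‖ ≤ (A + 1) * ‖p‖ :=
    calc ‖(A : ℂ) * p - conj p‖ ≤ ‖(A : ℂ) * p‖ + ‖conj p‖ := norm_sub_le _ _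
      _ = (A + 1) * ‖p‖ := by
        rw [norm_mul, norm_real, Real.norm_of_nonneg hA.le, norm_conj]; ring
  have hp0 : 0 < ‖p‖ := norm_pos_iff.2 fun h => by simp [h] at hp
  rw [cayleyAt, norm_div, hnum]
  calc |A - 1| / (A + 1) = |A - 1| * ‖p‖ / ((A + 1) * ‖p‖) := by
        rw [mul_div_mul_right _ _ hp0.ne']
    _ ≤ |A - 1| * ‖p‖ / ‖(A : ℂ) * p - conj p‖ := by
        gcongr
        exact norm_pos_iff.2 fun h => by
          have := congrArg im h
          simp only [sub_im, conj_im, im_ofReal_mul, zero_im] at this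
          nlinarith

lemma im_pos_of_mem_ball_im {c z : ℂ} (hz : z ∈ ball c c.im) : 0 < z.im := by
  rw [mem_ball, dist_eq] at hz
  have := (abs_im_le_norm (z - c)).trans_lt hz
  rw [sub_im] at this
  linarith [(abs_lt.1 this).1]

theorem eq_one_of_map_add_one_eq_mul {f : ℂ → ℂ} {A : ℝ} (hA : 0 < A)
    (hf : DifferentiableOn ℂ f {z | 0 < z.im}) (hf_im : ∀ z : ℂ, 0 < z.im → 0 < (f z).im)
    (hf_shift : ∀ z : ℂ, 0 < z.im → f (z + 1) = A * f z) : A = 1 := by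
  by_contra hA₁
  set q := |A - 1| / (A + 1)
  have hq : 0 < q := div_pos (abs_pos.2 (sub_ne_zero.2 hA₁)) (by linarith)
  -- any `T` with `1 < T` and `1 / T < q` would do
  set T := q⁻¹ + 1
  have hT : 1 < T := by simp only [T]; linarith [inv_pos.2 hq]
  set c : ℂ := T * I
  have hc_im : c.im = T := by simp [c]
  have hc : 0 < c.im := by linarith
  have hball : ∀ z ∈ ball c T, 0 < z.im := fun z hz => im_pos_of_mem_ball_im (by rwa [hc_im])
  have hc1 : c + 1 ∈ ball c T := by simpa [dist_eq] using hT
  have upper := norm_cayleyAt_le_div_of_im_pos (hf.mono hball)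
    (fun w hw => hf_im w (hball w hw)) hc1
  rw [hf_shift c hc, add_sub_cancel_left, norm_one] at upper
  have lower := div_le_norm_cayleyAt_mul hA (hf_im c hc)
  have : q * T ≤ 1 := (le_div_iff₀ (by linarith)).1 (lower.trans upper)
  have : q * T = 1 + q := by rw [mul_add, mul_inv_cancel₀ hq.ne', mul_one]
  linarith

theorem no_hyperbolic_monodromy_general
    (s m : ℕ)
    (a : Fin s → ℝ) (hapos : ∀ j, 0 < a j)
    (j₀ : Fin s) (hj₀ : a j₀ ≠ 1)
    (F : (Fin s → ℂ) × (Fin m → ℂ) → ℂ)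
    (hol : DifferentiableOn ℂ F
      {p : (Fin s → ℂ) × (Fin m → ℂ) |
        (∀ j, 0 < (p.1 j).im) ∧ (∀ k, ‖p.2 k‖ < 1)})
    (hIm : ∀ (τ : Fin s → ℂ) (w : Fin m → ℂ),
      (∀ j, 0 < (τ j).im) → (∀ k, ‖w k‖ < 1) →
      0 < (F (τ, w)).im)
    (heq : ∀ (τ : Fin s → ℂ) (w : Fin m → ℂ),
      (∀ j, 0 < (τ j).im) → (∀ k, ‖w k‖ < 1) →
      ∀ j : Fin s, F (τ + Pi.single j 1, w) = (a j : ℂ) * F (τ, w)) :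
    False := by
  set τ : ℂ → Fin s → ℂ := Function.update (fun _ => I) j₀
  set f : ℂ → ℂ := fun z => F (τ z, 0)
  have hτ : ∀ z : ℂ, 0 < z.im → ∀ j, 0 < (τ z j).im := fun z hz j => by
    by_cases h : j = j₀ <;> simp [τ, h, hz]
  have hw : ∀ k : Fin m, ‖(0 : Fin m → ℂ) k‖ < 1 := by simp
  have hf : DifferentiableOn ℂ f {z | 0 < z.im} := by
    refine hol.comp (DifferentiableOn.prodMk (fun z _ => ?_) (differentiableOn_const _))
      fun z hz => ⟨hτ z hz, hw⟩
    exact (hasFDerivAt_update (𝕜 := ℂ) (fun _ => I) (i := j₀) z).differentiableAt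
      |>.differentiableWithinAt
  have hf_im : ∀ z : ℂ, 0 < z.im → 0 < (f z).im := fun z hz => hIm _ _ (hτ z hz) hw
  have hf_shift : ∀ z : ℂ, 0 < z.im → f (z + 1) = a j₀ * f z := fun z hz => by
    have : τ (z + 1) = τ z + Pi.single j₀ 1 := by
      funext j
      by_cases h : j = j₀ <;> simp [τ, h]
    simp only [f, this]
    exact heq _ _ (hτ z hz) hw j₀
  exact hj₀ (eq_one_of_map_add_one_eq_mul (hapos j₀) hf hf_im hf_shift)

/-- The hyperbolic case is excluded in the local extension theorem for
transversely hyperbolic structures: there is no nonvacuous holomorphic function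
`F : ℍ^s × 𝔻^m → ℂ` with values of positive imaginary part satisfying
`F(τ + e_j, w) = a_j · F(τ, w)` with all `a_j > 0` and some `a_{j₀} ≠ 1`. -/
theorem no_hyperbolic_monodromy
    (s m : ℕ) (hs : 1 ≤ s)
    (a : Fin s → ℝ) (hapos : ∀ j, 0 < a j)
    (j₀ : Fin s) (hj₀ : a j₀ ≠ 1)
    (F : (Fin s → ℂ) × (Fin m → ℂ) → ℂ)
    (hol : DifferentiableOn ℂ F
      {p : (Fin s → ℂ) × (Fin m → ℂ) |
        (∀ j, 0 < (p.1 j).im) ∧ (∀ k, ‖p.2 k‖ < 1)})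
    (hIm : ∀ (τ : Fin s → ℂ) (w : Fin m → ℂ),
      (∀ j, 0 < (τ j).im) → (∀ k, ‖w k‖ < 1) →
      0 < (F (τ, w)).im)
    (heq : ∀ (τ : Fin s → ℂ) (w : Fin m → ℂ),
      (∀ j, 0 < (τ j).im) → (∀ k, ‖w k‖ < 1) →
      ∀ j : Fin s, F (τ + Pi.single j 1, w) = (a j : ℂ) * F (τ, w)) :
    False :=
  no_hyperbolic_monodromy_general s m a hapos j₀ hj₀ F hol hIm heq
end

section
/- Let s ≥ 1 and m ≥ 0 be integers and let F : ℍ^s × 𝔻^m → ℂ be a holomorphic function satisfying F(τ + e_j, w) = F(τ, w) for all (τ,w) ∈ ℍ^s × 𝔻^m and all j ∈ {1,…,s}. Then there exists a holomorphic function G : (𝔻∖{0})^s × 𝔻^m → ℂ such that F(τ,w) = G(e^{2πiτ_1},…,e^{2πiτ_s}, w) for all (τ,w) ∈ ℍ^s × 𝔻^m. (This is the descent step used repeatedly in the proof of the local extension theorem: a function on the universal cover of the punctured polydisk which is invariant under the deck transformations τ_j ↦ τ_j + 1 is induced by a well-defined univalued holomorphic function on the punctured polydisk itself.) -/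
open Complex Real

/-!
Since the unit translations generate `ℤ^s`, `F` is invariant under all integer translations in
`τ`, and `τ ↦ e^{2πiτ}` identifies `ℍ/ℤ` with `𝔻 ∖ {0}`. Hence `G(q, w) := F(log q / 2πi, w)` is
well defined for any branch of the logarithm. Near a given point the principal branch may be
replaced by a holomorphic local inverse of `τ ↦ e^{2πiτ}`, which makes `G` locally a composition
of holomorphic maps.
-/

open Filter Function.Periodic Set Topology

def upperHalfSpace (ι : Type*) : Set (ι → ℂ) := {τ | ∀ j, 0 < (τ j).im}

def puncturedPolydisk (ι : Type*) : Set (ι → ℂ) := {q | ∀ j, q j ≠ 0 ∧ ‖q j‖ < 1}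

variable {ι : Type*}

theorem isOpen_upperHalfSpace [Finite ι] : IsOpen (upperHalfSpace ι) := by
  simp only [upperHalfSpace, ofPred_forall]
  exact isOpen_iInter_of_finite fun j ↦ isOpen_lt continuous_const (by fun_prop)

theorem add_mem_upperHalfSpace {τ v : ι → ℂ} (hτ : τ ∈ upperHalfSpace ι)
    (hv : ∀ j, (v j).im = 0) : τ + v ∈ upperHalfSpace ι := fun j ↦ by
  simpa [hv j] using hτ j

theorem invQParam_mem_upperHalfSpace {q : ι → ℂ} (hq : q ∈ puncturedPolydisk ι) :
    (fun j ↦ invQParam 1 (q j)) ∈ upperHalfSpace ι := fun j ↦ by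
  rw [im_invQParam]
  exact mul_pos_of_neg_of_neg (div_neg_of_neg_of_pos (by norm_num) (by positivity))
    (Real.log_neg (norm_pos_iff.2 (hq j).1) (hq j).2)

def realPeriods {β : Type*} (f : (ι → ℂ) → β) : AddSubgroup (ι → ℂ) where
  carrier := {v | (∀ j, (v j).im = 0) ∧ ∀ τ ∈ upperHalfSpace ι, f (τ + v) = f τ}
  zero_mem' := ⟨fun j ↦ by simp, fun τ _ ↦ by simp⟩
  add_mem' := by
    rintro u v ⟨hu, hfu⟩ ⟨hv, hfv⟩
    refine ⟨fun j ↦ by simp [hu j, hv j], fun τ hτ ↦ ?_⟩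
    rw [← add_assoc, hfv _ (add_mem_upperHalfSpace hτ hu), hfu τ hτ]
  neg_mem' := by
    rintro v ⟨hv, hfv⟩
    have hv' : ∀ j, ((-v) j).im = 0 := fun j ↦ by simp [hv j]
    refine ⟨hv', fun τ hτ ↦ ?_⟩
    rw [← hfv _ (add_mem_upperHalfSpace hτ hv'), neg_add_cancel_right]

theorem intCast_mem_realPeriods [Fintype ι] [DecidableEq ι] {β : Type*} {f : (ι → ℂ) → β}
    (hf : ∀ τ ∈ upperHalfSpace ι, ∀ j, f (τ + Pi.single j 1) = f τ) (n : ι → ℤ) :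
    (fun j ↦ (n j : ℂ)) ∈ realPeriods f := by
  have hsingle : ∀ j, Pi.single j 1 ∈ realPeriods f := fun j ↦
    ⟨fun i ↦ by by_cases h : i = j <;> simp [h], fun τ hτ ↦ hf τ hτ j⟩
  have hsum : (fun j ↦ (n j : ℂ)) = ∑ j, n j • Pi.single j (1 : ℂ) := by
    ext i; simp [Finset.sum_apply, Pi.single_apply]
  rw [hsum]
  exact AddSubgroup.sum_mem _ fun j _ ↦ AddSubgroup.zsmul_mem _ (hsingle j) _

theorem exists_localInverse_qParam {h : ℝ} (hh : h ≠ 0) (z : ℂ) :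
    ∃ L : ℂ → ℂ, DifferentiableAt ℂ L (qParam h z) ∧ L (qParam h z) = z ∧
      ∀ᶠ q in 𝓝 (qParam h z), qParam h (L q) = q := by
  have hderiv : HasStrictDerivAt (qParam h) (qParam h z * (2 * π * I / h)) z := by
    simpa only [id_eq, mul_one] using!
      (((hasStrictDerivAt_id z).const_mul (2 * π * I)).div_const (h : ℂ)).cexp
  have hne : qParam h z * (2 * π * I / h) ≠ 0 :=
    mul_ne_zero (qParam_ne_zero z) (div_ne_zero two_pi_I_ne_zero (mod_cast hh))
  exact ⟨_, (hderiv.to_localInverse hne).hasStrictFDerivAt.differentiableAt,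
    (hderiv.eventually_left_inverse hne).self_of_nhds, hderiv.eventually_right_inverse hne⟩

theorem apply_invQParam_qParam [Fintype ι] [DecidableEq ι] {β : Type*} {f : (ι → ℂ) → β}
    (hf : ∀ τ ∈ upperHalfSpace ι, ∀ j, f (τ + Pi.single j 1) = f τ)
    {τ : ι → ℂ} (hτ : τ ∈ upperHalfSpace ι) :
    f (fun j ↦ invQParam 1 (qParam 1 (τ j))) = f τ := by
  choose n hn using fun j ↦ qParam_left_inv_mod_period one_ne_zero (τ j)
  have hshift : (fun j ↦ invQParam 1 (qParam 1 (τ j))) = τ + fun j ↦ (n j : ℂ) := by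
    ext j; simp [hn]
  rw [hshift]
  exact (intCast_mem_realPeriods hf n).2 τ hτ

section Descent

variable {W E : Type*} {F : (ι → ℂ) × W → E} {V : Set W}

noncomputable def descent (F : (ι → ℂ) × W → E) (p : (ι → ℂ) × W) : E :=
  F (fun j ↦ invQParam 1 (p.1 j), p.2)

theorem descent_qParam [Fintype ι] [DecidableEq ι]
    (hper : ∀ τ ∈ upperHalfSpace ι, ∀ w ∈ V, ∀ j, F (τ + Pi.single j 1, w) = F (τ, w))
    {τ : ι → ℂ} (hτ : τ ∈ upperHalfSpace ι) {w : W} (hw : w ∈ V) :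
    descent F (fun j ↦ qParam 1 (τ j), w) = F (τ, w) :=
  apply_invQParam_qParam (f := fun τ ↦ F (τ, w)) (fun τ hτ ↦ hper τ hτ w hw) hτ

theorem differentiableOn_descent [Fintype ι] [DecidableEq ι] [NormedAddCommGroup W]
    [NormedSpace ℂ W] [NormedAddCommGroup E] [NormedSpace ℂ E]
    (hF : DifferentiableOn ℂ F (upperHalfSpace ι ×ˢ V))
    (hper : ∀ τ ∈ upperHalfSpace ι, ∀ w ∈ V, ∀ j, F (τ + Pi.single j 1, w) = F (τ, w)) :
    DifferentiableOn ℂ (descent F) (puncturedPolydisk ι ×ˢ V) := by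
  rintro p ⟨hp, hpV⟩
  -- `invQParam 1` jumps across the negative real axis; near `p` we compare it with holomorphic
  -- local inverses of `qParam 1`, which agree with it modulo `ℤ`.
  choose L hLdiff hLp hLinv using
    fun j ↦ exists_localInverse_qParam one_ne_zero (invQParam 1 (p.1 j))
  simp only [qParam_right_inv one_ne_zero (hp _).1] at hLdiff hLp hLinv
  set ψ : (ι → ℂ) × W → (ι → ℂ) × W := fun q ↦ (fun j ↦ L j (q.1 j), q.2)
  have hψ : DifferentiableAt ℂ ψ p :=
    (differentiableAt_pi.2 fun j ↦ (hLdiff j).comp p (by fun_prop)).prodMk differentiableAt_snd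
  have hψp : ψ p ∈ upperHalfSpace ι ×ˢ V := by
    refine ⟨?_, hpV⟩
    simpa only [ψ, hLp] using invQParam_mem_upperHalfSpace hp
  have hLinv' : ∀ᶠ q in 𝓝 p, ∀ j, qParam 1 (L j (q.1 j)) = q.1 j :=
    eventually_all.2 fun j ↦
      (((continuous_apply j).comp continuous_fst).tendsto p).eventually (hLinv j)
  have hψH : ∀ᶠ q in 𝓝 p, (ψ q).1 ∈ upperHalfSpace ι :=
    hψ.continuousAt.fst.eventually_mem (isOpen_upperHalfSpace.mem_nhds hψp.1)
  have hnear : ∀ᶠ q in 𝓝[puncturedPolydisk ι ×ˢ V] p,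
      ψ q ∈ upperHalfSpace ι ×ˢ V ∧ descent F q = F (ψ q) := by
    filter_upwards [nhdsWithin_le_nhds hLinv', nhdsWithin_le_nhds hψH, self_mem_nhdsWithin]
      with q hqL hqH hq
    refine ⟨⟨hqH, hq.2⟩, ?_⟩
    calc descent F q = descent F (fun j ↦ qParam 1 (L j (q.1 j)), q.2) := by simp only [hqL]
      _ = F (ψ q) := descent_qParam hper hqH hq.2
  have hcomp := (differentiableWithinAt_inter' (t := ψ ⁻¹' (upperHalfSpace ι ×ˢ V))
    (hnear.mono fun q hq ↦ hq.1)).1 ((hF _ hψp).comp' p hψ.differentiableWithinAt)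
  exact hcomp.congr_of_eventuallyEq_of_mem (hnear.mono fun q hq ↦ hq.2) ⟨hp, hpV⟩

end Descent

theorem descend_to_punctured_polydisk_general
    (s m : ℕ)
    (F : (Fin s → ℂ) × (Fin m → ℂ) → ℂ)
    (hol : DifferentiableOn ℂ F
      {p : (Fin s → ℂ) × (Fin m → ℂ) |
        (∀ j, 0 < (p.1 j).im) ∧ (∀ k, ‖p.2 k‖ < 1)})
    (heq : ∀ (τ : Fin s → ℂ) (w : Fin m → ℂ),
      (∀ j, 0 < (τ j).im) → (∀ k, ‖w k‖ < 1) →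
      ∀ j : Fin s, F (τ + Pi.single j 1, w) = F (τ, w)) :
    ∃ G : (Fin s → ℂ) × (Fin m → ℂ) → ℂ,
      DifferentiableOn ℂ G
        {p : (Fin s → ℂ) × (Fin m → ℂ) |
          (∀ j, p.1 j ≠ 0 ∧ ‖p.1 j‖ < 1) ∧
          (∀ k, ‖p.2 k‖ < 1)} ∧
      ∀ (τ : Fin s → ℂ) (w : Fin m → ℂ),
        (∀ j, 0 < (τ j).im) → (∀ k, ‖w k‖ < 1) →
        F (τ, w) = G (fun j => Complex.exp (2 * Real.pi * Complex.I * τ j), w) := by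
  have hper : ∀ τ ∈ upperHalfSpace (Fin s), ∀ w ∈ {w : Fin m → ℂ | ∀ k, ‖w k‖ < 1}, ∀ j,
      F (τ + Pi.single j 1, w) = F (τ, w) := fun τ hτ w hw ↦ heq τ w hτ hw
  refine ⟨descent F, differentiableOn_descent hol hper, fun τ w hτ hw ↦ ?_⟩
  simpa [qParam] using (descent_qParam hper hτ hw).symm

/-- Descent step: a holomorphic function on `ℍ^s × 𝔻^m` invariant under
the deck transformations `τ_j ↦ τ_j + 1` is induced by a holomorphic function on the
punctured polydisk `(𝔻∖{0})^s × 𝔻^m` via `(τ, w) ↦ (e^{2πiτ_1},…,e^{2πiτ_s}, w)`. -/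
theorem descend_to_punctured_polydisk
    (s m : ℕ) (hs : 1 ≤ s)
    (F : (Fin s → ℂ) × (Fin m → ℂ) → ℂ)
    (hol : DifferentiableOn ℂ F
      {p : (Fin s → ℂ) × (Fin m → ℂ) |
        (∀ j, 0 < (p.1 j).im) ∧ (∀ k, ‖p.2 k‖ < 1)})
    (heq : ∀ (τ : Fin s → ℂ) (w : Fin m → ℂ),
      (∀ j, 0 < (τ j).im) → (∀ k, ‖w k‖ < 1) →
      ∀ j : Fin s, F (τ + Pi.single j 1, w) = F (τ, w)) :
    ∃ G : (Fin s → ℂ) × (Fin m → ℂ) → ℂ,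
      DifferentiableOn ℂ G
        {p : (Fin s → ℂ) × (Fin m → ℂ) |
          (∀ j, p.1 j ≠ 0 ∧ ‖p.1 j‖ < 1) ∧
          (∀ k, ‖p.2 k‖ < 1)} ∧
      ∀ (τ : Fin s → ℂ) (w : Fin m → ℂ),
        (∀ j, 0 < (τ j).im) → (∀ k, ‖w k‖ < 1) →
        F (τ, w) = G (fun j => Complex.exp (2 * Real.pi * Complex.I * τ j), w) :=
  descend_to_punctured_polydisk_general s m F hol heq
end

section
/- Let Ω ⊆ ℂ be open and let U : Ω → ℂ be holomorphic with 0 < |U(z)| < 1 for all z ∈ Ω. Then the function φ(z) = log(−log|U(z)|) is smooth on Ω and its Laplacian satisfies Δφ(z) = −|U′(z)|² / (|U(z)|² · (log|U(z)|)²) for every z ∈ Ω; in particular Δφ ≤ 0 on Ω, i.e. φ is superharmonic. (This is the curvature computation for the singular metric on the normal bundle of the section in the parabolic compactification, used in the proof of the uniqueness theorem for equivariant holomorphic maps: the curvature current of the weight φ is negative.) -/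
open Complex Real

/-- The Laplacian `Δf = ∂²f/∂x² + ∂²f/∂y²` of a real-valued function on `ℂ ≅ ℝ²`,
expressed via iterated real Fréchet derivatives in the directions `1` and `I`. -/
noncomputable def laplacian (f : ℂ → ℝ) (z : ℂ) : ℝ :=
  fderiv ℝ (fun w => fderiv ℝ f w 1) z 1 +
    fderiv ℝ (fun w => fderiv ℝ f w Complex.I) z Complex.I

set_option maxHeartbeats 1000000 in
/-- curvature computation for the singular metric weight in the parabolic
compactification: for `U` holomorphic with `0 < |U| < 1`, the function
`φ(z) = log(−log|U(z)|)` is smooth with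
`Δφ(z) = −|U′(z)|²/(|U(z)|²(log|U(z)|)²) ≤ 0`, i.e. `φ` is superharmonic. -/
theorem parabolic_weight_superharmonic
    (Ω : Set ℂ) (hΩ : IsOpen Ω)
    (U : ℂ → ℂ) (hU : DifferentiableOn ℂ U Ω)
    (hrange : ∀ z ∈ Ω, 0 < ‖U z‖ ∧ ‖U z‖ < 1) :
    ContDiffOn ℝ (⊤ : ℕ∞) (fun z => Real.log (-Real.log (‖U z‖))) Ω ∧
    ∀ z ∈ Ω,
      laplacian (fun z => Real.log (-Real.log (‖U z‖))) z =
        -(‖deriv U z‖) ^ 2 /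
          ((‖U z‖) ^ 2 * (Real.log (‖U z‖)) ^ 2) ∧
      laplacian (fun z => Real.log (-Real.log (‖U z‖))) z ≤ 0 := by
  have hA : AnalyticOnNhd ℂ U Ω := hU.analyticOnNhd hΩ
  have hA' : AnalyticOnNhd ℂ (deriv U) Ω := hA.deriv
  -- basic pointwise facts
  have hNpos : ∀ z ∈ Ω, 0 < Complex.normSq (U z) := fun z hz =>
    Complex.normSq_pos.mpr (norm_pos_iff.mp (hrange z hz).1)
  have hN0 : ∀ z ∈ Ω, Complex.normSq (U z) ≠ 0 := fun z hz => ne_of_gt (hNpos z hz)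
  have hNlt : ∀ z ∈ Ω, Complex.normSq (U z) < 1 := by
    intro z hz
    have h := (hrange z hz).2
    have : ‖U z‖ ^ 2 < 1 := by nlinarith [(hrange z hz).1]
    simpa [Complex.sq_norm] using this
  have hLneg : ∀ z ∈ Ω, Real.log (Complex.normSq (U z)) < 0 := fun z hz =>
    Real.log_neg (hNpos z hz) (hNlt z hz)
  have hLne : ∀ z ∈ Ω, Real.log (Complex.normSq (U z)) ≠ 0 := fun z hz =>
    ne_of_lt (hLneg z hz)
  have hg2 : ∀ z ∈ Ω, (-2⁻¹ : ℝ) * Real.log (Complex.normSq (U z)) ≠ 0 := by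
    intro z hz
    have := hLneg z hz
    nlinarith
  -- rewrite the weight
  have hφ : (fun z => Real.log (-Real.log (‖U z‖))) =
      fun z => Real.log ((-2⁻¹ : ℝ) * Real.log (Complex.normSq (U z))) := by
    funext z
    rw [Complex.norm_def, Real.log_sqrt (Complex.normSq_nonneg _)]
    congr 1
    ring
  rw [hφ]
  set φ : ℂ → ℝ := fun z => Real.log ((-2⁻¹ : ℝ) * Real.log (Complex.normSq (U z))) with hφdef
  -- smoothness
  have hsmooth : ContDiffOn ℝ (⊤ : ℕ∞) φ Ω := by
    intro z hz
    have hUz : ContDiffAt ℝ (⊤ : ℕ∞) U z := ((hA z hz).contDiffAt).restrict_scalars ℝ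
    have hre : ContDiffAt ℝ (⊤ : ℕ∞) (fun w => (U w).re) z :=
      (Complex.reCLM.contDiff.contDiffAt).comp z hUz
    have him : ContDiffAt ℝ (⊤ : ℕ∞) (fun w => (U w).im) z :=
      (Complex.imCLM.contDiff.contDiffAt).comp z hUz
    have hNs : ContDiffAt ℝ (⊤ : ℕ∞) (fun w => Complex.normSq (U w)) z := by
      have h := (hre.mul hre).add (him.mul him)
      simpa [Complex.normSq_apply] using h
    exact ((contDiffAt_const.mul (hNs.log (hN0 z hz))).log (hg2 z hz)).contDiffWithinAt
  refine ⟨hsmooth, ?_⟩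
  -- first derivative formula
  set F : ℂ → ℂ → ℝ := fun v w =>
    2 * ((U w).re * (deriv U w * v).re + (U w).im * (deriv U w * v).im) /
      (Complex.normSq (U w) * Real.log (Complex.normSq (U w))) with hFdef
  have h1 : ∀ w ∈ Ω, ∀ v, fderiv ℝ φ w v = F v w := by
    intro w hw v
    have hD : HasDerivAt U (deriv U w) w :=
      (hU.differentiableAt (hΩ.mem_nhds hw)).hasDerivAt
    have hDR := hD.complexToReal_fderiv
    have hre : HasFDerivAt (fun x => (U x).re)
        (Complex.reCLM.comp (deriv U w • (1 : ℂ →L[ℝ] ℂ))) w :=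
      (Complex.reCLM.hasFDerivAt).comp w hDR
    have him : HasFDerivAt (fun x => (U x).im)
        (Complex.imCLM.comp (deriv U w • (1 : ℂ →L[ℝ] ℂ))) w :=
      (Complex.imCLM.hasFDerivAt).comp w hDR
    have hN : HasFDerivAt (fun x => Complex.normSq (U x))
        (((U w).re • Complex.reCLM.comp (deriv U w • (1 : ℂ →L[ℝ] ℂ)) +
          (U w).re • Complex.reCLM.comp (deriv U w • (1 : ℂ →L[ℝ] ℂ))) +
         ((U w).im • Complex.imCLM.comp (deriv U w • (1 : ℂ →L[ℝ] ℂ)) +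
          (U w).im • Complex.imCLM.comp (deriv U w • (1 : ℂ →L[ℝ] ℂ)))) w := by
      have h := (hre.mul hre).add (him.mul him)
      simpa [Complex.normSq_apply, Pi.mul_def, Pi.add_def] using h
    have hφ' := ((hN.log (hN0 w hw)).const_mul (-2⁻¹ : ℝ)).log (hg2 w hw)
    rw [hφ'.fderiv]
    simp only [hFdef, ContinuousLinearMap.smul_apply, ContinuousLinearMap.neg_apply,
      ContinuousLinearMap.add_apply, ContinuousLinearMap.comp_apply,
      ContinuousLinearMap.coe_smul', Pi.smul_apply, ContinuousLinearMap.one_apply,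
      Complex.reCLM_apply, Complex.imCLM_apply, smul_eq_mul]
    field_simp
    ring
  -- main pointwise Laplacian computation
  intro z hz
  have hD : HasDerivAt U (deriv U z) z :=
    (hU.differentiableAt (hΩ.mem_nhds hz)).hasDerivAt
  have hDR := hD.complexToReal_fderiv
  have hre : HasFDerivAt (fun x => (U x).re)
      (Complex.reCLM.comp (deriv U z • (1 : ℂ →L[ℝ] ℂ))) z :=
    (Complex.reCLM.hasFDerivAt).comp z hDR
  have him : HasFDerivAt (fun x => (U x).im)
      (Complex.imCLM.comp (deriv U z • (1 : ℂ →L[ℝ] ℂ))) z :=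
    (Complex.imCLM.hasFDerivAt).comp z hDR
  have hN : HasFDerivAt (fun x => Complex.normSq (U x))
      (((U z).re • Complex.reCLM.comp (deriv U z • (1 : ℂ →L[ℝ] ℂ)) +
        (U z).re • Complex.reCLM.comp (deriv U z • (1 : ℂ →L[ℝ] ℂ))) +
       ((U z).im • Complex.imCLM.comp (deriv U z • (1 : ℂ →L[ℝ] ℂ)) +
        (U z).im • Complex.imCLM.comp (deriv U z • (1 : ℂ →L[ℝ] ℂ)))) z := by
    have h := (hre.mul hre).add (him.mul him)
    simpa [Complex.normSq_apply, Pi.mul_def, Pi.add_def] using h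
  have hD2 : HasDerivAt (deriv U) (deriv (deriv U) z) z :=
    ((hA' z hz).differentiableAt).hasDerivAt
  have hdne : Complex.normSq (U z) * Real.log (Complex.normSq (U z)) ≠ 0 :=
    mul_ne_zero (hN0 z hz) (hLne z hz)
  have e : ∀ v : ℂ, fderiv ℝ (F v) z v =
      2 * ((deriv U z * v).re ^ 2 + (deriv U z * v).im ^ 2 +
          (U z).re * (deriv (deriv U) z * v * v).re +
          (U z).im * (deriv (deriv U) z * v * v).im) /
        (Complex.normSq (U z) * Real.log (Complex.normSq (U z))) -
      (2 * ((U z).re * (deriv U z * v).re + (U z).im * (deriv U z * v).im)) ^ 2 *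
          (Real.log (Complex.normSq (U z)) + 1) /
        (Complex.normSq (U z) * Real.log (Complex.normSq (U z))) ^ 2 := by
    intro v
    have hrv : HasFDerivAt (fun w => (deriv U w * v).re)
        (Complex.reCLM.comp ((deriv (deriv U) z * v) • (1 : ℂ →L[ℝ] ℂ))) z :=
      (Complex.reCLM.hasFDerivAt).comp z ((hD2.mul_const v).complexToReal_fderiv)
    have hiv : HasFDerivAt (fun w => (deriv U w * v).im)
        (Complex.imCLM.comp ((deriv (deriv U) z * v) • (1 : ℂ →L[ℝ] ℂ))) z :=
      (Complex.imCLM.hasFDerivAt).comp z ((hD2.mul_const v).complexToReal_fderiv)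
    have hnum := ((hre.mul hrv).add (him.mul hiv)).const_mul (2 : ℝ)
    have hden := hN.mul (hN.log (hN0 z hz))
    have hinv := (hasDerivAt_inv hdne).comp_hasFDerivAt z hden
    have hFv := hnum.mul hinv
    simp only [Function.comp_def, Pi.mul_def, Pi.add_def] at hFv
    have hFeq : F v = fun w =>
        (2 * ((U w).re * (deriv U w * v).re + (U w).im * (deriv U w * v).im)) *
          (Complex.normSq (U w) * Real.log (Complex.normSq (U w)))⁻¹ := by
      funext w
      rw [hFdef]
      simp [div_eq_mul_inv]
    rw [hFeq, hFv.fderiv]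
    simp only [ContinuousLinearMap.smul_apply, ContinuousLinearMap.add_apply,
      ContinuousLinearMap.comp_apply, ContinuousLinearMap.coe_smul', Pi.smul_apply,
      ContinuousLinearMap.one_apply, Complex.reCLM_apply, Complex.imCLM_apply,
      smul_eq_mul]
    have hLz := hLne z hz
    have hNz := hN0 z hz
    field_simp
    ring
  have hev : ∀ v : ℂ, fderiv ℝ (fun w => fderiv ℝ φ w v) z = fderiv ℝ (F v) z := by
    intro v
    apply Filter.EventuallyEq.fderiv_eq
    filter_upwards [hΩ.mem_nhds hz] with w hw
    exact h1 w hw v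
  have hlap : laplacian φ z = fderiv ℝ (F 1) z 1 + fderiv ℝ (F Complex.I) z Complex.I := by
    rw [laplacian, hev 1, hev Complex.I]
  have hlogabs : Real.log (‖U z‖) = Real.log (Complex.normSq (U z)) / 2 := by
    rw [Complex.norm_def, Real.log_sqrt (Complex.normSq_nonneg _)]
  have hmain : laplacian φ z =
      -(‖deriv U z‖) ^ 2 /
        ((‖U z‖) ^ 2 * (Real.log (‖U z‖)) ^ 2) := by
    rw [hlap, e 1, e Complex.I, hlogabs, Complex.sq_norm, Complex.sq_norm]
    have hLz := hLne z hz
    have hNz := hN0 z hz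
    simp only [mul_one, Complex.mul_I_re, Complex.mul_I_im, Complex.neg_re, Complex.neg_im]
    have hNe : ((U z).re ^ 2 + (U z).im ^ 2) ≠ 0 := by
      have h := hNz; rw [Complex.normSq_apply] at h
      simpa [pow_two] using h
    have hLe : Real.log ((U z).re ^ 2 + (U z).im ^ 2) ≠ 0 := by
      have h := hLz; rw [Complex.normSq_apply] at h
      simpa [pow_two] using h
    simp only [Complex.normSq_apply, ← pow_two]
    field_simp
    ring
  refine ⟨hmain, ?_⟩
  rw [hmain]
  apply div_nonpos_of_nonpos_of_nonneg
  · exact neg_nonpos.mpr (sq_nonneg _)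
  · positivity
end

section
/- Let Γ be a subgroup of SL(2,ℝ) such that: (i) Γ is discrete (as a topological subspace of SL(2,ℝ)); (ii) every γ ∈ Γ with γ ≠ 1 acts on ℍ without fixed points (in particular −1 ∉ Γ); and (iii) the quotient topological space of ℍ by the Γ-action is compact. Let ρ : Γ → SL(2,ℝ) be a group homomorphism. If f₁, f₂ : ℍ → ℍ are holomorphic, nonconstant, and ρ-equivariant — i.e. f_i(γ • τ) = ρ(γ) • f_i(τ) for all γ ∈ Γ and τ ∈ ℍ, for i = 1,2 — then f₁ = f₂. (This is the uniqueness theorem for nonconstant equivariant holomorphic maps to the hyperbolic plane, in the case of a smooth projective curve C = ℍ/Γ of genus at least two; it says that a monodromy representation determines at most one branched hyperbolic structure.) -/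
/-!
Since `SL(2, ℝ)` acts on `ℍ` by isometries, `τ ↦ dist (f₁ τ) (f₂ τ)` is `Γ`-invariant, so by
compactness of `ℍ / Γ` it attains a maximum `M` at some `τ₀`. If `M > 0`, put `G = f₁ - f₂`,
`C = ‖G τ₀‖` and `s = sinh (M / 2)`: then `‖G‖ ≤ 2 s √(Im f₁ · Im f₂)` everywhere, with equality
at `τ₀`. By AM-GM, for a suitable `t > 0` the holomorphic function
`H = -i C s (t f₁ + f₂ / t) - conj (G τ₀) G` has nonnegative real part vanishing at `τ₀`, so it is
constant by the open mapping theorem. The resulting equalities make `conj (G τ₀) G` real, hence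
constant, and then `Im f₁` is constant, so `f₁` is constant.
-/

open UpperHalfPlane Matrix MatrixGroups

open Set ComplexConjugate

theorem DifferentiableOn.eqOn_of_mapsTo_of_notMem_interior {g : ℂ → ℂ} {U S : Set ℂ}
    (hg : DifferentiableOn ℂ g U) (hUo : IsOpen U) (hUc : IsPreconnected U)
    (hgS : MapsTo g U S) {z₀ : ℂ} (hz₀ : z₀ ∈ U) (hS : g z₀ ∉ interior S) :
    EqOn g (fun _ ↦ g z₀) U := by
  rcases (hg.analyticOnNhd hUo).is_constant_or_isOpen hUc with ⟨w, hw⟩ | hopen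
  · intro z hz
    simp only [hw z hz, hw z₀ hz₀]
  · exact absurd (interior_maximal hgS.image_subset (hopen U subset_rfl hUo)
      (mem_image_of_mem g hz₀)) hS

theorem two_mul_sqrt_mul_le {a b t : ℝ} (ha : 0 ≤ a) (hb : 0 ≤ b) (ht : 0 < t) :
    2 * √(a * b) ≤ t * a + b / t := by
  have hsq : t * a + b / t - 2 * √(a * b) = (t * √a - √b) ^ 2 / t := by
    field_simp
    rw [sub_sq, mul_pow, Real.sq_sqrt ha, Real.sq_sqrt hb, Real.sqrt_mul ha]
    ring
  have : 0 ≤ (t * √a - √b) ^ 2 / t := by positivity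
  linarith

theorem exists_pos_mul_add_div_eq_two_mul_sqrt {a b : ℝ} (ha : 0 < a) (hb : 0 < b) :
    ∃ t > 0, t * a + b / t = 2 * √(a * b) := by
  refine ⟨√b / √a, by positivity, ?_⟩
  rw [Real.sqrt_mul ha.le]
  field_simp
  rw [Real.sq_sqrt ha.le, Real.sq_sqrt hb.le]
  ring

theorem UpperHalfPlane.norm_coe_sub_eq (z w : ℍ) :
    ‖(z : ℂ) - w‖ = 2 * Real.sinh (dist z w / 2) * √(z.im * w.im) := by
  have : 0 < √(z.im * w.im) := by positivity
  rw [sinh_half_dist, ← Complex.dist_eq]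
  field_simp

theorem UpperHalfPlane.norm_coe_sub_le_of_dist_le {z w : ℍ} {r : ℝ} (h : dist z w ≤ r) :
    ‖(z : ℂ) - w‖ ≤ 2 * Real.sinh (r / 2) * √(z.im * w.im) := by
  rw [norm_coe_sub_eq]
  gcongr
  exact Real.sinh_le_sinh.mpr (by linarith)

theorem UpperHalfPlane.continuous_of_continuousOn_extend {f : ℍ → ℍ} {F : ℂ → ℂ}
    (hF : ContinuousOn F {z | 0 < z.im}) (hFf : ∀ τ : ℍ, F τ = f τ) : Continuous f := by
  refine isEmbedding_coe.continuous_iff.mpr ?_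
  simpa only [Function.comp_def, hFf] using hF.comp_continuous continuous_coe fun τ ↦ τ.2

theorem MulAction.exists_forall_le_of_compactSpace_quotient {G X β : Type*} [Group G]
    [MulAction G X] [TopologicalSpace X] [Nonempty X]
    [CompactSpace (Quotient (MulAction.orbitRel G X))]
    [LinearOrder β] [TopologicalSpace β] [ClosedIciTopology β]
    {u : X → β} (hu : Continuous u) (hinv : ∀ (g : G) (x : X), u (g • x) = u x) :
    ∃ x₀, ∀ x, u x ≤ u x₀ := by
  have hlift : ∀ x y, MulAction.orbitRel G X x y → u x = u y := by
    rintro x y ⟨g, rfl⟩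
    exact hinv g y
  have : Nonempty (Quotient (MulAction.orbitRel G X)) := .map (Quotient.mk _) ‹_›
  obtain ⟨q, -, hq⟩ := isCompact_univ.exists_isMaxOn univ_nonempty
    (hu.quotient_lift hlift).continuousOn
  obtain ⟨x₀, rfl⟩ := Quotient.exists_rep q
  exact ⟨x₀, fun x ↦ hq (mem_univ (Quotient.mk _ x))⟩

section HolomorphicSelfMaps

variable {U : Set ℂ} {F₁ F₂ : ℂ → ℂ} {s : ℝ} {z₀ : ℂ}

theorem exists_conj_mul_eq_of_norm_sub_le_of_eq (hUo : IsOpen U) (hUc : IsPreconnected U)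
    (hF₁ : DifferentiableOn ℂ F₁ U) (hF₂ : DifferentiableOn ℂ F₂ U)
    (hF₁U : ∀ z ∈ U, 0 < (F₁ z).im) (hF₂U : ∀ z ∈ U, 0 < (F₂ z).im) (hs : 0 ≤ s)
    (hle : ∀ z ∈ U, ‖F₁ z - F₂ z‖ ≤ 2 * s * √((F₁ z).im * (F₂ z).im))
    (hz₀ : z₀ ∈ U) (heq : ‖F₁ z₀ - F₂ z₀‖ = 2 * s * √((F₁ z₀).im * (F₂ z₀).im)) :
    ∃ t > 0, ∀ w ∈ U, conj (F₁ z₀ - F₂ z₀) * (F₁ w - F₂ w) =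
      ↑(‖F₁ z₀ - F₂ z₀‖ * s * (t * (F₁ w).im + (F₂ w).im / t)) := by
  obtain ⟨t, ht, ht₀⟩ := exists_pos_mul_add_div_eq_two_mul_sqrt (hF₁U z₀ hz₀) (hF₂U z₀ hz₀)
  refine ⟨t, ht, ?_⟩
  set C := ‖F₁ z₀ - F₂ z₀‖
  set K : ℂ → ℂ := fun w ↦ conj (F₁ z₀ - F₂ z₀) * (F₁ w - F₂ w)
  set H : ℂ → ℂ := fun w ↦ -Complex.I * (C * s) * (t * F₁ w + F₂ w / t) - K w
  have hH_re (w : ℂ) : (H w).re = C * s * (t * (F₁ w).im + (F₂ w).im / t) - (K w).re := by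
    simp [H, Complex.div_re]
  have hK_le : ∀ w ∈ U, ‖K w‖ ≤ C * s * (t * (F₁ w).im + (F₂ w).im / t) := by
    intro w hw
    have hamgm := two_mul_sqrt_mul_le (hF₁U w hw).le (hF₂U w hw).le ht
    calc ‖K w‖ = C * ‖F₁ w - F₂ w‖ := by simp only [K, C, norm_mul, Complex.norm_conj]
      _ ≤ C * (2 * s * √((F₁ w).im * (F₂ w).im)) := by gcongr; exact hle w hw
      _ = C * s * (2 * √((F₁ w).im * (F₂ w).im)) := by ring
      _ ≤ _ := by gcongr
  have hH_re_z₀ : (H z₀).re = 0 := by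
    have hK₀ : (K z₀).re = C ^ 2 := by
      simp only [K, C, Complex.conj_mul']
      norm_cast
    rw [hH_re, hK₀, ht₀, heq]
    ring
  have hH_const : EqOn H (fun _ ↦ H z₀) U := by
    have hH : DifferentiableOn ℂ H U := by
      simp only [H, K]
      fun_prop
    refine hH.eqOn_of_mapsTo_of_notMem_interior hUo hUc (S := {w | 0 ≤ w.re})
      (fun w hw ↦ ?_) hz₀ ?_
    · rw [mem_ofPred_eq, hH_re]
      linarith [Complex.re_le_norm (K w), hK_le w hw]
    · simp [Complex.interior_setOfPred_le_re, hH_re_z₀]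
  intro w hw
  have hre : (K w).re = C * s * (t * (F₁ w).im + (F₂ w).im / t) := by
    linarith [hH_re w, congrArg Complex.re (hH_const hw), hH_re_z₀]
  have him : (K w).im = 0 := by
    refine Complex.abs_re_eq_norm.mp (le_antisymm (Complex.abs_re_le_norm _) ?_)
    linarith [le_abs_self (K w).re, hK_le w hw]
  exact Complex.ext (by rw [Complex.ofReal_re]; exact hre) (by rw [Complex.ofReal_im]; exact him)

theorem eqOn_const_of_norm_sub_le_of_eq (hUo : IsOpen U) (hUc : IsPreconnected U)
    (hF₁ : DifferentiableOn ℂ F₁ U) (hF₂ : DifferentiableOn ℂ F₂ U)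
    (hF₁U : ∀ z ∈ U, 0 < (F₁ z).im) (hF₂U : ∀ z ∈ U, 0 < (F₂ z).im) (hs : 0 < s)
    (hle : ∀ z ∈ U, ‖F₁ z - F₂ z‖ ≤ 2 * s * √((F₁ z).im * (F₂ z).im))
    (hz₀ : z₀ ∈ U) (heq : ‖F₁ z₀ - F₂ z₀‖ = 2 * s * √((F₁ z₀).im * (F₂ z₀).im)) :
    EqOn F₁ (fun _ ↦ F₁ z₀) U := by
  set K : ℂ → ℂ := fun w ↦ conj (F₁ z₀ - F₂ z₀) * (F₁ w - F₂ w)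
  obtain ⟨t, ht, hK_eq⟩ : ∃ t > 0, ∀ w ∈ U,
      K w = ((‖F₁ z₀ - F₂ z₀‖ * s * (t * (F₁ w).im + (F₂ w).im / t) : ℝ) : ℂ) :=
    exists_conj_mul_eq_of_norm_sub_le_of_eq hUo hUc hF₁ hF₂ hF₁U hF₂U hs.le hle hz₀ heq
  have hC : 0 < ‖F₁ z₀ - F₂ z₀‖ := by
    have := hF₁U z₀ hz₀
    have := hF₂U z₀ hz₀
    rw [heq]
    positivity
  have hK_const : EqOn K (fun _ ↦ K z₀) U := by
    have hK : DifferentiableOn ℂ K U := by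
      simp only [K]
      fun_prop
    refine hK.eqOn_of_mapsTo_of_notMem_interior hUo hUc (S := {w | w.im ≤ 0})
      (fun w hw ↦ by rw [mem_ofPred_eq, hK_eq w hw, Complex.ofReal_im]) hz₀ ?_
    rw [Complex.interior_setOfPred_im_le, hK_eq z₀ hz₀]
    simp
  have him_const : ∀ w ∈ U, (F₁ w).im = (F₁ z₀).im := by
    intro w hw
    have hG : F₁ w - F₂ w = F₁ z₀ - F₂ z₀ :=
      mul_left_cancel₀ ((map_ne_zero _).mpr (norm_pos_iff.mp hC)) (hK_const hw)
    have hsum : t * (F₁ w).im + (F₂ w).im / t = t * (F₁ z₀).im + (F₂ z₀).im / t := by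
      have := (hK_eq w hw).symm.trans ((hK_const hw).trans (hK_eq z₀ hz₀))
      exact mul_left_cancel₀ (by positivity) (Complex.ofReal_injective this)
    have hdiff : (F₁ w).im - (F₂ w).im = (F₁ z₀).im - (F₂ z₀).im := by
      simpa only [Complex.sub_im] using congrArg Complex.im hG
    have key : (t + 1 / t) * ((F₁ w).im - (F₁ z₀).im) = 0 := by
      linear_combination hsum + hdiff / t
    exact sub_eq_zero.mp ((mul_eq_zero.mp key).resolve_left (by positivity))
  refine hF₁.eqOn_of_mapsTo_of_notMem_interior hUo hUc (S := {w | w.im ≤ (F₁ z₀).im})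
    (fun w hw ↦ (him_const w hw).le) hz₀ ?_
  simp [Complex.interior_setOfPred_im_le]

end HolomorphicSelfMaps

theorem UpperHalfPlane.apply_eq_of_forall_dist_le {f₁ f₂ : ℍ → ℍ} {F₁ F₂ : ℂ → ℂ}
    (hF₁ : DifferentiableOn ℂ F₁ {z | 0 < z.im}) (hF₁f : ∀ τ : ℍ, F₁ τ = f₁ τ)
    (hF₂ : DifferentiableOn ℂ F₂ {z | 0 < z.im}) (hF₂f : ∀ τ : ℍ, F₂ τ = f₂ τ) {τ₀ : ℍ}
    (hmax : ∀ τ, dist (f₁ τ) (f₂ τ) ≤ dist (f₁ τ₀) (f₂ τ₀)) (hpos : 0 < dist (f₁ τ₀) (f₂ τ₀))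
    (τ : ℍ) : f₁ τ = f₁ τ₀ := by
  have hF₁z (z : ℂ) (hz : 0 < z.im) : F₁ z = f₁ ⟨z, hz⟩ := hF₁f ⟨z, hz⟩
  have hF₂z (z : ℂ) (hz : 0 < z.im) : F₂ z = f₂ ⟨z, hz⟩ := hF₂f ⟨z, hz⟩
  have hconst := eqOn_const_of_norm_sub_le_of_eq isOpen_upperHalfPlaneSet
    (convex_halfSpace_im_gt 0).isPreconnected hF₁ hF₂
    (fun z hz ↦ by rw [hF₁z z hz]; exact (f₁ _).im_pos)
    (fun z hz ↦ by rw [hF₂z z hz]; exact (f₂ _).im_pos)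
    (Real.sinh_pos_iff.mpr (half_pos hpos))
    (fun z hz ↦ by rw [hF₁z z hz, hF₂z z hz]; exact norm_coe_sub_le_of_dist_le (hmax _))
    τ₀.im_pos (by rw [hF₁f, hF₂f]; exact norm_coe_sub_eq _ _)
  exact UpperHalfPlane.ext ((hF₁f τ).symm.trans ((hconst τ.im_pos).trans (hF₁f τ₀)))

theorem uniqueness_of_equivariant_holomorphic_map_general
    (Γ : Subgroup (Matrix.SpecialLinearGroup (Fin 2) ℝ))
    (hcpt : CompactSpace (Quotient (MulAction.orbitRel Γ UpperHalfPlane)))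
    (ρ : Γ →* Matrix.SpecialLinearGroup (Fin 2) ℝ)
    (f₁ f₂ : UpperHalfPlane → UpperHalfPlane)
    (hol₁ : ∃ F : ℂ → ℂ, DifferentiableOn ℂ F {z : ℂ | 0 < z.im} ∧
      ∀ τ : UpperHalfPlane, F (τ : ℂ) = ((f₁ τ : UpperHalfPlane) : ℂ))
    (hol₂ : ∃ F : ℂ → ℂ, DifferentiableOn ℂ F {z : ℂ | 0 < z.im} ∧
      ∀ τ : UpperHalfPlane, F (τ : ℂ) = ((f₂ τ : UpperHalfPlane) : ℂ))
    (hnc₁ : ∃ τ τ' : UpperHalfPlane, f₁ τ ≠ f₁ τ')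
    (heqv₁ : ∀ (γ : Γ) (τ : UpperHalfPlane),
      f₁ ((γ : Matrix.SpecialLinearGroup (Fin 2) ℝ) • τ) = (ρ γ) • (f₁ τ))
    (heqv₂ : ∀ (γ : Γ) (τ : UpperHalfPlane),
      f₂ ((γ : Matrix.SpecialLinearGroup (Fin 2) ℝ) • τ) = (ρ γ) • (f₂ τ)) :
    f₁ = f₂ := by
  obtain ⟨F₁, hF₁, hF₁f⟩ := hol₁
  obtain ⟨F₂, hF₂, hF₂f⟩ := hol₂
  have hcont : Continuous fun τ ↦ dist (f₁ τ) (f₂ τ) :=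
    (continuous_of_continuousOn_extend hF₁.continuousOn hF₁f).dist
      (continuous_of_continuousOn_extend hF₂.continuousOn hF₂f)
  obtain ⟨τ₀, hmax⟩ := MulAction.exists_forall_le_of_compactSpace_quotient (G := Γ) hcont
    fun γ τ ↦ by simp only [Subgroup.smul_def, heqv₁, heqv₂, dist_smul]
  rcases (dist_nonneg (x := f₁ τ₀) (y := f₂ τ₀)).eq_or_lt with hzero | hpos
  · funext τ
    exact dist_le_zero.mp (hzero ▸ hmax τ)
  · obtain ⟨τ, τ', hne⟩ := hnc₁
    have hconst := apply_eq_of_forall_dist_le hF₁ hF₁f hF₂ hF₂f hmax hpos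
    exact absurd ((hconst τ).trans (hconst τ').symm) hne

/-- Uniqueness of nonconstant equivariant holomorphic maps `ℍ → ℍ`:
if `Γ ≤ SL(2,ℝ)` is discrete (as a subset of the space of real 2×2 matrices), acts
freely on `ℍ`, and has compact quotient, and `ρ : Γ → SL(2,ℝ)` is a homomorphism,
then any two nonconstant holomorphic `ρ`-equivariant maps `f₁, f₂ : ℍ → ℍ` coincide. -/
theorem uniqueness_of_equivariant_holomorphic_map
    (Γ : Subgroup (Matrix.SpecialLinearGroup (Fin 2) ℝ))
    (hdisc : DiscreteTopology
      {A : Matrix (Fin 2) (Fin 2) ℝ | ∃ γ : Γ, ((γ : Matrix.SpecialLinearGroup (Fin 2) ℝ) : Matrix (Fin 2) (Fin 2) ℝ) = A})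
    (hfree : ∀ γ : Γ, γ ≠ 1 → ∀ τ : UpperHalfPlane,
      (γ : Matrix.SpecialLinearGroup (Fin 2) ℝ) • τ ≠ τ)
    (hcpt : CompactSpace (Quotient (MulAction.orbitRel Γ UpperHalfPlane)))
    (ρ : Γ →* Matrix.SpecialLinearGroup (Fin 2) ℝ)
    (f₁ f₂ : UpperHalfPlane → UpperHalfPlane)
    (hol₁ : ∃ F : ℂ → ℂ, DifferentiableOn ℂ F {z : ℂ | 0 < z.im} ∧
      ∀ τ : UpperHalfPlane, F (τ : ℂ) = ((f₁ τ : UpperHalfPlane) : ℂ))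
    (hol₂ : ∃ F : ℂ → ℂ, DifferentiableOn ℂ F {z : ℂ | 0 < z.im} ∧
      ∀ τ : UpperHalfPlane, F (τ : ℂ) = ((f₂ τ : UpperHalfPlane) : ℂ))
    (hnc₁ : ∃ τ τ' : UpperHalfPlane, f₁ τ ≠ f₁ τ')
    (hnc₂ : ∃ τ τ' : UpperHalfPlane, f₂ τ ≠ f₂ τ')
    (heqv₁ : ∀ (γ : Γ) (τ : UpperHalfPlane),
      f₁ ((γ : Matrix.SpecialLinearGroup (Fin 2) ℝ) • τ) = (ρ γ) • (f₁ τ))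
    (heqv₂ : ∀ (γ : Γ) (τ : UpperHalfPlane),
      f₂ ((γ : Matrix.SpecialLinearGroup (Fin 2) ℝ) • τ) = (ρ γ) • (f₂ τ)) :
    f₁ = f₂ :=
  uniqueness_of_equivariant_holomorphic_map_general Γ hcpt ρ f₁ f₂ hol₁ hol₂ hnc₁ heqv₁ heqv₂
end

section
/- Let K be a number field with r₁ real embeddings and r₂ pairs of complex-conjugate (non-real) embeddings. Call a unit u of the ring of integers 𝒪_K totally positive if φ(u) > 0 for every ring homomorphism φ : K → ℝ. Then: (a) the totally positive units form a subgroup of finite index in the unit group 𝒪_K^×; and (b) if r₂ ≥ 2, then for every subgroup U of 𝒪_K^× that can be generated by at most r₁ elements, the image of the set of totally positive units under the quotient map 𝒪_K^× → 𝒪_K^×/U is infinite. (This is the arithmetic input, via Dirichlet's unit theorem, behind the paper's construction of non-Kähler compact complex manifolds X(K,U) associated to number fields: since the unit rank is r₁ + r₂ − 1 and an admissible group U has rank r₁, for r₂ ≥ 2 the quotient 𝒪_K^{×,+}/U yields infinitely many automorphisms of X(K,U) with infinite transverse order.) -/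
/-!
Signs at the real embeddings give a homomorphism from the unit group to the finite group
`{±1}^{r₁}` whose kernel is the group of totally positive units, so it has finite index.
If its image in `𝒪_K^× / U` were finite, `U` would have finite index in `𝒪_K^×`; the logarithmic
embedding would then map the at most `r₁` generators of `U` onto a spanning set of a real
vector space of dimension `r₁ + r₂ - 1 > r₁`, which is absurd.
-/

open NumberField

instance Subgroup.finiteIndex_comap {G H : Type*} [Group G] [Group H] (f : G →* H)
    (K : Subgroup H) [K.FiniteIndex] : (K.comap f).FiniteIndex :=
  ⟨by rw [index_comap]; exact (isFiniteRelIndex_of_finiteIndex (K := f.range)).relIndex_ne_zero⟩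

/-- `[G : U] ≤ [G : H] · [HU : U]`. -/
theorem Subgroup.finiteIndex_of_finite_image_mk {G : Type*} [Group G] (H U : Subgroup G)
    [U.Normal] [H.FiniteIndex] (h : ((QuotientGroup.mk : G → G ⧸ U) '' H).Finite) :
    U.FiniteIndex := by
  set H' := H.map (QuotientGroup.mk' U)
  have : Finite H' := h.to_subtype
  have : H'.FiniteIndex := ⟨ne_zero_of_dvd_ne_zero FiniteIndex.index_ne_zero
    (H.index_map_dvd (QuotientGroup.mk'_surjective U))⟩
  have : Finite (G ⧸ U) := H'.finite_iff_finite_and_finiteIndex.mpr ⟨‹_›, ‹_›⟩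
  exact finiteIndex_of_finite_quotient

instance Units.finiteIndex_posSubgroup (R : Type*) [Ring R] [LinearOrder R]
    [IsStrictOrderedRing R] : (Units.posSubgroup R).FiniteIndex :=
  ⟨by rw [Units.index_posSubgroup]; exact two_ne_zero⟩

theorem AddMonoidHom.mem_span_image_of_mem_closure {G 𝕜 V : Type*} [Group G] [Ring 𝕜]
    [AddCommGroup V] [Module 𝕜 V] (f : Additive G →+ V) {T : Set G} {g : G}
    (hg : g ∈ Subgroup.closure T) : f (.ofMul g) ∈ Submodule.span 𝕜 (f ∘ .ofMul '' T) := by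
  induction hg using Subgroup.closure_induction with
  | mem x hx => exact Submodule.subset_span ⟨x, hx, rfl⟩
  | one => simp
  | mul x y _ _ hx hy => simpa using add_mem hx hy
  | inv x _ hx => simpa using neg_mem hx

theorem AddMonoidHom.mem_span_image_of_finiteIndex_closure {G 𝕜 V : Type*} [CommGroup G]
    [DivisionRing 𝕜] [CharZero 𝕜] [AddCommGroup V] [Module 𝕜 V] (f : Additive G →+ V)
    {T : Set G} [(Subgroup.closure T).FiniteIndex] (g : G) :
    f (.ofMul g) ∈ Submodule.span 𝕜 (f ∘ .ofMul '' T) := by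
  have hn : ((Subgroup.closure T).index : 𝕜) ≠ 0 :=
    Nat.cast_ne_zero.mpr Subgroup.FiniteIndex.index_ne_zero
  have := f.mem_span_image_of_mem_closure (𝕜 := 𝕜) ((Subgroup.closure T).pow_index_mem g)
  rwa [ofMul_pow, map_nsmul, ← Nat.cast_smul_eq_nsmul 𝕜, Submodule.smul_mem_iff _ hn] at this

namespace NumberField

variable (K : Type*) [Field K]

noncomputable def realEmbeddingEquivIsReal :
    (K →+* ℝ) ≃ {φ : K →+* ℂ // ComplexEmbedding.IsReal φ} where
  toFun ψ := ⟨Complex.ofRealHom.comp ψ, by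
    rw [ComplexEmbedding.isReal_iff]
    ext x
    simp⟩
  invFun φ := φ.2.embedding
  left_inv ψ := by
    ext x
    exact Complex.ofReal_re (ψ x)
  right_inv φ := by
    ext x
    exact φ.2.coe_embedding_apply x

theorem InfinitePlace.nrRealPlaces_eq_card_ringHom_real [NumberField K] :
    InfinitePlace.nrRealPlaces K = Nat.card (K →+* ℝ) := by
  classical
  rw [← card_real_embeddings, ← Nat.card_eq_fintype_card,
    Nat.card_congr (realEmbeddingEquivIsReal K)]

namespace Units

noncomputable def totallyPositive : Subgroup (𝓞 K)ˣ :=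
  ⨅ φ : K →+* ℝ,
    (Units.posSubgroup ℝ).comap (Units.map (φ.comp (algebraMap (𝓞 K) K)).toMonoidHom)

variable {K} in
theorem mem_totallyPositive {u : (𝓞 K)ˣ} :
    u ∈ totallyPositive K ↔ ∀ φ : K →+* ℝ, 0 < φ (algebraMap (𝓞 K) K (u : 𝓞 K)) := by
  simp [totallyPositive, Subgroup.mem_iInf, Units.mem_posSubgroup]

instance finiteIndex_totallyPositive [NumberField K] : (totallyPositive K).FiniteIndex :=
  Subgroup.finiteIndex_iInf fun _ ↦ inferInstance

open dirichletUnitTheorem in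
variable {K} in
theorem rank_le_card_of_finiteIndex_closure [NumberField K] (T : Finset (𝓞 K)ˣ)
    [(Subgroup.closure (T : Set (𝓞 K)ˣ)).FiniteIndex] : rank K ≤ T.card := by
  classical
  set L := logEmbedding K ∘ Additive.ofMul
  have hspan : Submodule.span ℝ ((T.image L : Finset (logSpace K)) : Set (logSpace K)) = ⊤ := by
    rw [eq_top_iff, ← unitLattice_span_eq_top, Submodule.span_le, Finset.coe_image]
    rintro _ ⟨u, -, rfl⟩
    exact (logEmbedding K).mem_span_image_of_finiteIndex_closure u.toMul
  rw [← Units.finrank_eq_rank, ← finrank_top ℝ, ← hspan]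
  exact (finrank_span_finset_le_card _).trans Finset.card_image_le

end Units

end NumberField

/-- (a) The totally positive units of the ring of integers of a number
field `K` form a subgroup of finite index of the unit group; (b) if `K` has at least
two pairs of complex-conjugate embeddings, then for any subgroup `U` of the unit group
generated by at most `r₁` elements (`r₁` = number of real embeddings), the image of
the totally positive units in the quotient `𝒪_K^× / U` is infinite. -/
theorem totally_positive_units_finite_index_and_infinite_image
    (K : Type*) [Field K] [NumberField K] :
    (∃ S : Subgroup (𝓞 K)ˣ,
      (∀ u : (𝓞 K)ˣ, u ∈ S ↔
        ∀ φ : K →+* ℝ, 0 < φ (algebraMap (𝓞 K) K (u : 𝓞 K))) ∧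
      S.FiniteIndex) ∧
    (2 ≤ NumberField.InfinitePlace.nrComplexPlaces K →
      ∀ U : Subgroup (𝓞 K)ˣ,
        (∃ T : Finset (𝓞 K)ˣ, T.card ≤ Nat.card (K →+* ℝ) ∧
          Subgroup.closure (T : Set (𝓞 K)ˣ) = U) →
        Set.Infinite
          ((QuotientGroup.mk : (𝓞 K)ˣ → (𝓞 K)ˣ ⧸ U) ''
            {u : (𝓞 K)ˣ | ∀ φ : K →+* ℝ, 0 < φ (algebraMap (𝓞 K) K (u : 𝓞 K))})) := by
  open NumberField.Units in
  refine ⟨⟨totallyPositive K, fun _ ↦ mem_totallyPositive, inferInstance⟩, ?_⟩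
  rintro hr₂ _ ⟨T, hT, rfl⟩ hfin
  have : (Subgroup.closure (T : Set (𝓞 K)ˣ)).FiniteIndex := by
    refine Subgroup.finiteIndex_of_finite_image_mk (totallyPositive K) _ ?_
    simpa only [← mem_totallyPositive, SetLike.setOfPred_mem_eq] using hfin
  have hrank := rank_le_card_of_finiteIndex_closure T
  rw [rank, InfinitePlace.card_eq_nrRealPlaces_add_nrComplexPlaces] at hrank
  rw [← InfinitePlace.nrRealPlaces_eq_card_ringHom_real] at hT
  omega
end
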